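/- arXiv:1410.8314 — 5 statements merged into one kernel-verified Lean document; each statement's English description precedes it below -/
import Mathlib

section
/- If R₁ ⊆ X × Y and R₂ ⊆ Y × Z are relations, μ_X ∈ Disc(X), μ_Y ∈ Disc(Y), μ_Z ∈ Disc(Z) are distributions with μ_X related to μ_Y under the lifting of R₁ and μ_Y related to μ_Z under the lifting of R₂, then μ_X is related to μ_Z under the lifting of the composition R₁ ∘ R₂ (where x (R₁∘R₂) z iff there exists y with x R₁ y and y R₂ z). -/
open Finset

/-- A (finitely supported, here: on a finite type) probability distribution. -/
def IsDist {X : Type*} [Fintype X] (μ : X → ℝ) : Prop :=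
  (∀ x, 0 ≤ μ x) ∧ ∑ x, μ x = 1

/-- The lifting of a relation `R ⊆ X × Y` to distributions, via a weighting function. -/
def IsLifting {X Y : Type*} [Fintype X] [Fintype Y]
    (R : X → Y → Prop) (μ : X → ℝ) (ν : Y → ℝ) : Prop :=
  ∃ w : X → Y → ℝ,
    (∀ x y, 0 ≤ w x y ∧ w x y ≤ 1) ∧
    (∀ x y, 0 < w x y → R x y) ∧
    (∀ x, ∑ y, w x y = μ x) ∧
    (∀ y, ∑ x, w x y = ν y)

/-!
Glue the two weightings along the common marginal `μY`: `w x z = ∑ y, w₁ x y * w₂ y z / μY y`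
draws `y` from `w₁ x ·` and then `z` from the conditional `w₂ y · / μY y`. Summing out `z`
(resp. `x`) gives back `w₁` (resp. `w₂`), hence the marginals `μX` and `μZ`; a term is positive
only if both `w₁ x y` and `w₂ y z` are, which witnesses the composite relation; and
`w x z ≤ ∑ y, w₂ y z = μZ z ≤ 1`.
-/

lemma IsDist.le_one {X : Type*} [Fintype X] {μ : X → ℝ} (hμ : IsDist μ) (x : X) : μ x ≤ 1 :=
  hμ.2 ▸ single_le_sum (fun x _ => hμ.1 x) (mem_univ x)

/-- Terms with `ν y = 0` are `0` by `a / 0 = 0`, which is harmless since then `w₁ · y = 0` when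
`ν` is the second marginal of `w₁`. -/
noncomputable def compWeight {X Y Z : Type*} [Fintype Y]
    (w₁ : X → Y → ℝ) (w₂ : Y → Z → ℝ) (ν : Y → ℝ) (x : X) (z : Z) : ℝ :=
  ∑ y, w₁ x y * w₂ y z / ν y

section compWeight

variable {X Y Z : Type*} [Fintype Y] {w₁ : X → Y → ℝ} {w₂ : Y → Z → ℝ} {ν : Y → ℝ}

lemma compWeight_nonneg [Fintype X] (hw₁ : ∀ x y, 0 ≤ w₁ x y) (hw₂ : ∀ y z, 0 ≤ w₂ y z)
    (hcol : ∀ y, ∑ x, w₁ x y = ν y) (x : X) (z : Z) : 0 ≤ compWeight w₁ w₂ ν x z :=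
  sum_nonneg fun y _ =>
    div_nonneg (mul_nonneg (hw₁ x y) (hw₂ y z)) (hcol y ▸ sum_nonneg fun x _ => hw₁ x y)

lemma compWeight_le_sum [Fintype X] (hw₁ : ∀ x y, 0 ≤ w₁ x y) (hw₂ : ∀ y z, 0 ≤ w₂ y z)
    (hcol : ∀ y, ∑ x, w₁ x y = ν y) (x : X) (z : Z) :
    compWeight w₁ w₂ ν x z ≤ ∑ y, w₂ y z := by
  refine sum_le_sum fun y _ => ?_
  have hle : w₁ x y ≤ ν y := hcol y ▸ single_le_sum (fun x _ => hw₁ x y) (mem_univ x)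
  refine div_le_of_le_mul₀ ((hw₁ x y).trans hle) (hw₂ y z) ?_
  rw [mul_comm]
  exact mul_le_mul_of_nonneg_left hle (hw₂ y z)

lemma exists_pos_pos_of_compWeight_pos (hw₁ : ∀ x y, 0 ≤ w₁ x y) (hw₂ : ∀ y z, 0 ≤ w₂ y z)
    {x : X} {z : Z} (h : 0 < compWeight w₁ w₂ ν x z) : ∃ y, 0 < w₁ x y ∧ 0 < w₂ y z := by
  obtain ⟨y, -, hy⟩ := exists_ne_zero_of_sum_ne_zero h.ne'
  refine ⟨y, (hw₁ x y).lt_of_ne ?_, (hw₂ y z).lt_of_ne ?_⟩ <;>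
    rintro h₀ <;> simp [← h₀] at hy

lemma sum_compWeight_snd [Fintype X] [Fintype Z] (hw₁ : ∀ x y, 0 ≤ w₁ x y)
    (hcol : ∀ y, ∑ x, w₁ x y = ν y) (hrow : ∀ y, ∑ z, w₂ y z = ν y) (x : X) :
    ∑ z, compWeight w₁ w₂ ν x z = ∑ y, w₁ x y := by
  unfold compWeight
  rw [sum_comm]
  refine sum_congr rfl fun y _ => ?_
  rw [← sum_div, ← mul_sum, hrow, mul_div_cancel_of_imp fun h => ?_]
  exact (sum_eq_zero_iff_of_nonneg fun x _ => hw₁ x y).1 ((hcol y).trans h) x (mem_univ x)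

lemma sum_compWeight_fst [Fintype X] [Fintype Z] (hw₂ : ∀ y z, 0 ≤ w₂ y z)
    (hcol : ∀ y, ∑ x, w₁ x y = ν y) (hrow : ∀ y, ∑ z, w₂ y z = ν y) (z : Z) :
    ∑ x, compWeight w₁ w₂ ν x z = ∑ y, w₂ y z := by
  unfold compWeight
  rw [sum_comm]
  refine sum_congr rfl fun y _ => ?_
  rw [← sum_div, ← sum_mul, hcol, mul_div_cancel_left_of_imp fun h => ?_]
  exact (sum_eq_zero_iff_of_nonneg fun z _ => hw₂ y z).1 ((hrow y).trans h) z (mem_univ z)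

end compWeight

theorem lifting_comp_general {X Y Z : Type*} [Fintype X] [Fintype Y] [Fintype Z]
    (R₁ : X → Y → Prop) (R₂ : Y → Z → Prop)
    (μX : X → ℝ) (μY : Y → ℝ) (μZ : Z → ℝ)
    (hZ : IsDist μZ)
    (h₁ : IsLifting R₁ μX μY) (h₂ : IsLifting R₂ μY μZ) :
    IsLifting (fun x z => ∃ y, R₁ x y ∧ R₂ y z) μX μZ := by
  obtain ⟨w₁, hb₁, hR₁, hrow₁, hcol₁⟩ := h₁
  obtain ⟨w₂, hb₂, hR₂, hrow₂, hcol₂⟩ := h₂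
  have hw₁ : ∀ x y, 0 ≤ w₁ x y := fun x y => (hb₁ x y).1
  have hw₂ : ∀ y z, 0 ≤ w₂ y z := fun y z => (hb₂ y z).1
  refine ⟨compWeight w₁ w₂ μY, fun x z => ⟨compWeight_nonneg hw₁ hw₂ hcol₁ x z, ?_⟩,
    fun x z h => ?_, fun x => ?_, fun z => ?_⟩
  · exact (compWeight_le_sum hw₁ hw₂ hcol₁ x z).trans ((hcol₂ z).trans_le (hZ.le_one z))
  · obtain ⟨y, h₁, h₂⟩ := exists_pos_pos_of_compWeight_pos hw₁ hw₂ h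
    exact ⟨y, hR₁ x y h₁, hR₂ y z h₂⟩
  · rw [sum_compWeight_snd hw₁ hcol₁ hrow₂, hrow₁]
  · rw [sum_compWeight_fst hw₂ hcol₁ hrow₂, hcol₂]

/-- Liftings compose along relational composition. -/
theorem lifting_comp {X Y Z : Type*} [Fintype X] [Fintype Y] [Fintype Z]
    (R₁ : X → Y → Prop) (R₂ : Y → Z → Prop)
    (μX : X → ℝ) (μY : Y → ℝ) (μZ : Z → ℝ)
    (hX : IsDist μX) (hY : IsDist μY) (hZ : IsDist μZ)
    (h₁ : IsLifting R₁ μX μY) (h₂ : IsLifting R₂ μY μZ) :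
    IsLifting (fun x z => ∃ y, R₁ x y ∧ R₂ y z) μX μZ :=
  lifting_comp_general R₁ R₂ μX μY μZ hZ h₁ h₂
end

section
/- If R ⊆ X × X is a transitive relation, then its lifting to probability distributions is transitive. -/
/-!
Glue the two weightings along their common marginal `ν`:
`w x z = ∑ y, w₁ x y * w₂ y z / ν y`. Its marginals are `μ` and `ξ`, and `w x z > 0` only when
some `y` has `w₁ x y > 0` and `w₂ y z > 0`, i.e. `R x y` and `R y z`, so `R x z` by transitivity.
-/

open Finset

section Glue

variable {X Y Z : Type*} [Fintype Y] {w₁ : X → Y → ℝ} {w₂ : Y → Z → ℝ} {ν : Y → ℝ}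

/-- Division by `ν y = 0` yields the junk value `0`, which is harmless: both weights through such
a `y` vanish. -/
noncomputable def glue (w₁ : X → Y → ℝ) (w₂ : Y → Z → ℝ) (ν : Y → ℝ) (x : X) (z : Z) : ℝ :=
  ∑ y, w₁ x y * w₂ y z / ν y

lemma glue_nonneg (hw₁ : ∀ x y, 0 ≤ w₁ x y) (hw₂ : ∀ y z, 0 ≤ w₂ y z) (hν : ∀ y, 0 ≤ ν y)
    (x : X) (z : Z) : 0 ≤ glue w₁ w₂ ν x z :=
  sum_nonneg fun y _ => div_nonneg (mul_nonneg (hw₁ x y) (hw₂ y z)) (hν y)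

lemma sum_glue_right [Fintype X] [Fintype Z] (hw₁ : ∀ x y, 0 ≤ w₁ x y)
    (hcol₁ : ∀ y, ∑ x, w₁ x y = ν y)
    (hrow₂ : ∀ y, ∑ z, w₂ y z = ν y) (x : X) :
    ∑ z, glue w₁ w₂ ν x z = ∑ y, w₁ x y := by
  have hzero : ∀ y, ν y = 0 → w₁ x y = 0 := fun y hy =>
    congrFun ((Fintype.sum_eq_zero_iff_of_nonneg (hw₁ · y)).1 ((hcol₁ y).trans hy)) x
  calc ∑ z, glue w₁ w₂ ν x z = ∑ y, w₁ x y * (∑ z, w₂ y z) / ν y := by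
        simp only [glue, mul_sum, sum_div]
        exact sum_comm
    _ = ∑ y, w₁ x y := sum_congr rfl fun y _ => by rw [hrow₂ y, mul_div_cancel_of_imp (hzero y)]

lemma sum_glue_left [Fintype X] [Fintype Z] (hw₂ : ∀ y z, 0 ≤ w₂ y z)
    (hcol₁ : ∀ y, ∑ x, w₁ x y = ν y)
    (hrow₂ : ∀ y, ∑ z, w₂ y z = ν y) (z : Z) :
    ∑ x, glue w₁ w₂ ν x z = ∑ y, w₂ y z := by
  have hzero : ∀ y, ν y = 0 → w₂ y z = 0 := fun y hy =>
    congrFun ((Fintype.sum_eq_zero_iff_of_nonneg (hw₂ y ·)).1 ((hrow₂ y).trans hy)) z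
  calc ∑ x, glue w₁ w₂ ν x z = ∑ y, (∑ x, w₁ x y) * (w₂ y z / ν y) := by
        simp only [glue, mul_div_assoc, sum_mul]
        exact sum_comm
    _ = ∑ y, w₂ y z := sum_congr rfl fun y _ => by rw [hcol₁ y, mul_div_cancel_of_imp' (hzero y)]

lemma exists_pos_of_glue_pos (hw₁ : ∀ x y, 0 ≤ w₁ x y) (hw₂ : ∀ y z, 0 ≤ w₂ y z) {x : X} {z : Z}
    (h : 0 < glue w₁ w₂ ν x z) : ∃ y, 0 < w₁ x y ∧ 0 < w₂ y z := by
  unfold glue at h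
  obtain ⟨y, -, hy⟩ := exists_lt_of_sum_lt (sum_const_zero.trans_lt h)
  refine ⟨y, (hw₁ x y).lt_of_ne' ?_, (hw₂ y z).lt_of_ne' ?_⟩ <;>
    · intro h0
      simp [h0] at hy

end Glue

namespace IsLifting

variable {X Y Z : Type*} [Fintype X] [Fintype Y] [Fintype Z]

lemma mono {R R' : X → Y → Prop} (hRR' : ∀ x y, R x y → R' x y) {μ : X → ℝ} {ν : Y → ℝ}
    (h : IsLifting R μ ν) : IsLifting R' μ ν := by
  obtain ⟨w, hw01, hwR, hrow, hcol⟩ := h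
  exact ⟨w, hw01, fun x y hxy => hRR' x y (hwR x y hxy), hrow, hcol⟩

theorem comp {R : X → Y → Prop} {S : Y → Z → Prop} {μ : X → ℝ} {ν : Y → ℝ} {ξ : Z → ℝ}
    (hμ : ∀ x, μ x ≤ 1) (h₁ : IsLifting R μ ν) (h₂ : IsLifting S ν ξ) :
    IsLifting (Relation.Comp R S) μ ξ := by
  obtain ⟨w₁, hw₁01, hw₁R, hrow₁, hcol₁⟩ := h₁
  obtain ⟨w₂, hw₂01, hw₂S, hrow₂, hcol₂⟩ := h₂
  have hw₁ : ∀ x y, 0 ≤ w₁ x y := fun x y => (hw₁01 x y).1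
  have hw₂ : ∀ y z, 0 ≤ w₂ y z := fun y z => (hw₂01 y z).1
  have hν : ∀ y, 0 ≤ ν y := fun y => hcol₁ y ▸ sum_nonneg fun x _ => hw₁ x y
  have hw := glue_nonneg hw₁ hw₂ hν
  have hrow : ∀ x, ∑ z, glue w₁ w₂ ν x z = μ x := fun x =>
    (sum_glue_right hw₁ hcol₁ hrow₂ x).trans (hrow₁ x)
  refine ⟨glue w₁ w₂ ν, fun x z => ⟨hw x z, ?_⟩, fun x z hxz => ?_, hrow,
    fun z => (sum_glue_left hw₂ hcol₁ hrow₂ z).trans (hcol₂ z)⟩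
  · calc glue w₁ w₂ ν x z ≤ ∑ z', glue w₁ w₂ ν x z' :=
        single_le_sum (fun z' _ => hw x z') (mem_univ z)
      _ = μ x := hrow x
      _ ≤ 1 := hμ x
  · obtain ⟨y, hxy, hyz⟩ := exists_pos_of_glue_pos hw₁ hw₂ hxz
    exact ⟨y, hw₁R x y hxy, hw₂S y z hyz⟩

end IsLifting

theorem lifting_transitive_general {X : Type*} [Fintype X]
    (R : X → X → Prop) (hR : Transitive R)
    (μ ν ξ : X → ℝ) (hμ : IsDist μ)
    (h₁ : IsLifting R μ ν) (h₂ : IsLifting R ν ξ) :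
    IsLifting R μ ξ :=
  (h₁.comp hμ.le_one h₂).mono fun _ _ ⟨_, hxy, hyz⟩ => hR hxy hyz

/-- The lifting of a transitive relation is transitive. -/
theorem lifting_transitive {X : Type*} [Fintype X]
    (R : X → X → Prop) (hR : Transitive R)
    (μ ν ξ : X → ℝ) (hμ : IsDist μ) (hν : IsDist ν) (hξ : IsDist ξ)
    (h₁ : IsLifting R μ ν) (h₂ : IsLifting R ν ξ) :
    IsLifting R μ ξ :=
  lifting_transitive_general R hR μ ν ξ hμ h₁ h₂
end

section
/- Let I be a finite index set, (p_i)_{i∈I} positive reals summing to 1, and for each i ∈ I let μ_{x,i} ∈ Disc(X) and μ_{y,i} ∈ Disc(Y) be distributions such that μ_{x,i} is related to μ_{y,i} under the lifting of a relation R ⊆ X × Y. Then the convex combinations ∑_i p_i · μ_{x,i} and ∑_i p_i · μ_{y,i} are related under the lifting of R. -/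
open Finset

section ConvexCombination

variable {I Z : Type*} [Fintype I] [Fintype Z]

lemma sum_mul_mem_Icc_of_mem_Icc {p a : I → ℝ} (hp : ∀ i, 0 ≤ p i) (hp1 : ∑ i, p i = 1)
    (ha : ∀ i, a i ∈ Set.Icc (0 : ℝ) 1) : ∑ i, p i * a i ∈ Set.Icc (0 : ℝ) 1 :=
  (convex_Icc 0 1).sum_mem (fun i _ => hp i) hp1 fun i _ => ha i

lemma exists_pos_of_sum_mul_pos {p a : I → ℝ} (hp : ∀ i, 0 ≤ p i)
    (h : 0 < ∑ i, p i * a i) : ∃ i, 0 < a i := by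
  obtain ⟨i, -, hi⟩ := exists_lt_of_sum_lt (s := univ) (f := 0)
    (g := fun i => p i * a i) (by simpa using h)
  exact ⟨i, pos_of_mul_pos_right hi (hp i)⟩

lemma sum_sum_mul_eq_sum_mul_sum (p : I → ℝ) (f : I → Z → ℝ) :
    ∑ z, ∑ i, p i * f i z = ∑ i, p i * ∑ z, f i z := by
  rw [sum_comm]
  simp only [mul_sum]

end ConvexCombination

theorem lifting_convex_general {X Y I : Type*} [Fintype X] [Fintype Y] [Fintype I]
    (R : X → Y → Prop)
    (p : I → ℝ) (hp : ∀ i, 0 < p i) (hp1 : ∑ i, p i = 1)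
    (μx : I → X → ℝ) (μy : I → Y → ℝ)
    (h : ∀ i, IsLifting R (μx i) (μy i)) :
    IsLifting R (fun x => ∑ i, p i * μx i x) (fun y => ∑ i, p i * μy i y) := by
  choose w hw01 hwR hwx hwy using h
  have hp0 : ∀ i, 0 ≤ p i := fun i => (hp i).le
  refine ⟨fun x y => ∑ i, p i * w i x y, fun x y => ?_, fun x y hpos => ?_, fun x => ?_,
    fun y => ?_⟩
  · exact sum_mul_mem_Icc_of_mem_Icc hp0 hp1 fun i => hw01 i x y
  · obtain ⟨i, hi⟩ := exists_pos_of_sum_mul_pos hp0 hpos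
    exact hwR i x y hi
  · simp only [sum_sum_mul_eq_sum_mul_sum, hwx]
  · simp only [sum_sum_mul_eq_sum_mul_sum, hwy]

/-- Liftings are preserved by convex combinations. -/
theorem lifting_convex {X Y I : Type*} [Fintype X] [Fintype Y] [Fintype I]
    (R : X → Y → Prop)
    (p : I → ℝ) (hp : ∀ i, 0 < p i) (hp1 : ∑ i, p i = 1)
    (μx : I → X → ℝ) (μy : I → Y → ℝ)
    (hdx : ∀ i, IsDist (μx i)) (hdy : ∀ i, IsDist (μy i))
    (h : ∀ i, IsLifting R (μx i) (μy i)) :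
    IsLifting R (fun x => ∑ i, p i * μx i x) (fun y => ∑ i, p i * μy i y) :=
  lifting_convex_general R p hp hp1 μx μy h
end

section
/- If μ and ν are finitely supported probability distributions on X and μ is related to ν under the lifting of an equivalence relation R, then for every equivalence class C of R, μ(C) = ν(C), i.e., ∑_{x∈C} μ(x) = ∑_{x∈C} ν(x). -/
open Finset

/-- Weights vanish off `R`, so cutting the weighting down to the rows in `A` or to the columns
in `B` gives the same function, whose total is both `μ(A)` and `ν(B)`. -/
theorem IsLifting.sum_eq_sum_of_rel_iff {X Y : Type*} [Fintype X] [Fintype Y]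
    {R : X → Y → Prop} {μ : X → ℝ} {ν : Y → ℝ} (h : IsLifting R μ ν)
    (A : Finset X) (B : Finset Y) (hAB : ∀ x y, R x y → (x ∈ A ↔ y ∈ B)) :
    ∑ x ∈ A, μ x = ∑ y ∈ B, ν y := by
  classical
  obtain ⟨w, hw01, hwR, hrow, hcol⟩ := h
  have hweight : ∀ x y, (if x ∈ A then w x y else 0) = if y ∈ B then w x y else 0 := by
    intro x y
    rcases (hw01 x y).1.eq_or_lt with hzero | hpos
    · simp [← hzero]
    · simp only [hAB x y (hwR x y hpos)]
  calc ∑ x ∈ A, μ x = ∑ x, ∑ y, if x ∈ A then w x y else 0 := by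
        simp only [sum_ite_irrel, sum_const_zero, hrow, Fintype.sum_ite_mem]
    _ = ∑ y, ∑ x, if y ∈ B then w x y else 0 := by simp only [hweight]; exact sum_comm
    _ = ∑ y ∈ B, ν y := by
        simp only [sum_ite_irrel, sum_const_zero, hcol, Fintype.sum_ite_mem]

theorem lifting_class_measure_general {X : Type*} [Fintype X]
    (R : X → X → Prop) [DecidableRel R] (hR : Equivalence R)
    (μ ν : X → ℝ)
    (h : IsLifting R μ ν) :
    ∀ x : X, ∑ z ∈ Finset.univ.filter (fun z => R x z), μ z
           = ∑ z ∈ Finset.univ.filter (fun z => R x z), ν z :=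
  fun x => h.sum_eq_sum_of_rel_iff _ _ fun _ _ hyz => by
    simpa only [mem_filter, mem_univ, true_and] using
      ⟨fun hxy => hR.trans hxy hyz, fun hxz => hR.trans hxz (hR.symm hyz)⟩

/-- If μ and ν are related under the lifting of an equivalence relation R, then they
assign the same probability to each equivalence class. -/
theorem lifting_class_measure {X : Type*} [Fintype X]
    (R : X → X → Prop) [DecidableRel R] (hR : Equivalence R)
    (μ ν : X → ℝ) (hμ : IsDist μ) (hν : IsDist ν)
    (h : IsLifting R μ ν) :
    ∀ x : X, ∑ z ∈ Finset.univ.filter (fun z => R x z), μ z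
           = ∑ z ∈ Finset.univ.filter (fun z => R x z), ν z :=
  lifting_class_measure_general R hR μ ν h
end

section
/- Conversely, if R is an equivalence relation on a finite type X and μ, ν ∈ Disc(X) satisfy μ(C) = ν(C) for every equivalence class C of R, then μ is related to ν under the lifting of R. -/
open Finset

namespace EquivClass

variable {X : Type*} [Fintype X] (R : X → X → Prop) [DecidableRel R]

def mass (μ : X → ℝ) (x : X) : ℝ := ∑ z ∈ univ.filter (R x ·), μ z

variable {R}

lemma mass_nonneg {μ : X → ℝ} (hμ : ∀ x, 0 ≤ μ x) (x : X) : 0 ≤ mass R μ x :=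
  sum_nonneg fun z _ => hμ z

lemma mass_congr (hR : Equivalence R) (μ : X → ℝ) {x y : X} (hxy : R x y) :
    mass R μ x = mass R μ y := by
  refine sum_congr (filter_congr fun z _ => ?_) fun _ _ => rfl
  exact ⟨hR.trans (hR.symm hxy), hR.trans hxy⟩

lemma sum_filter_rel_left (hR : ∀ x y, R x y → R y x) (μ : X → ℝ) (y : X) :
    ∑ x ∈ univ.filter (R · y), μ x = mass R μ y :=
  sum_congr (filter_congr fun _ _ => ⟨hR _ _, hR _ _⟩) fun _ _ => rfl

lemma le_mass (hR : ∀ x, R x x) {μ : X → ℝ} (hμ : ∀ x, 0 ≤ μ x) (x : X) : μ x ≤ mass R μ x :=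
  single_le_sum (fun z _ => hμ z) (by simpa using hR x)

lemma eq_zero_of_mass_eq_zero (hR : ∀ x, R x x) {μ : X → ℝ} (hμ : ∀ x, 0 ≤ μ x) {x : X}
    (hx : mass R μ x = 0) : μ x = 0 :=
  le_antisymm (hx ▸ le_mass hR hμ x) (hμ x)

variable (R)

noncomputable def coupling (μ ν : X → ℝ) (x y : X) : ℝ :=
  if R x y then μ x * ν y / mass R μ x else 0

variable {R}

lemma rel_of_coupling_pos {μ ν : X → ℝ} {x y : X} (h : 0 < coupling R μ ν x y) : R x y := by
  by_contra hxy
  simp [coupling, hxy] at h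

lemma coupling_nonneg {μ ν : X → ℝ} (hμ : ∀ x, 0 ≤ μ x) (hν : ∀ x, 0 ≤ ν x) (x y : X) :
    0 ≤ coupling R μ ν x y := by
  unfold coupling
  split_ifs
  · exact div_nonneg (mul_nonneg (hμ x) (hν y)) (mass_nonneg hμ x)
  · rfl

lemma coupling_le (hR : ∀ x, R x x) {μ ν : X → ℝ} (hμ : ∀ x, 0 ≤ μ x) (hν : ∀ x, 0 ≤ ν x)
    (x y : X) : coupling R μ ν x y ≤ ν y := by
  unfold coupling
  split_ifs
  · rw [mul_comm, mul_div_assoc]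
    exact mul_le_of_le_one_right (hν y) (div_le_one_of_le₀ (le_mass hR hμ x) (mass_nonneg hμ x))
  · exact hν y

lemma sum_coupling_right (hR : ∀ x, R x x) {μ ν : X → ℝ} (hμ : ∀ x, 0 ≤ μ x) {x : X}
    (h : mass R μ x = mass R ν x) : ∑ y, coupling R μ ν x y = μ x := by
  simp only [coupling]
  rw [← sum_filter, ← sum_div, ← mul_sum, ← mass, ← h]
  exact mul_div_cancel_of_imp (eq_zero_of_mass_eq_zero hR hμ)

lemma sum_coupling_left (hR : Equivalence R) {μ ν : X → ℝ} (hν : ∀ x, 0 ≤ ν x) {y : X}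
    (h : mass R μ y = mass R ν y) : ∑ x, coupling R μ ν x y = ν y := by
  have hcol : ∀ x, coupling R μ ν x y = if R x y then μ x * ν y / mass R μ y else 0 := by
    intro x
    unfold coupling
    split_ifs with hxy
    · rw [mass_congr hR μ hxy]
    · rfl
  rw [sum_congr rfl fun x _ => hcol x, ← sum_filter, ← sum_div, ← sum_mul,
    sum_filter_rel_left (R := R) (fun _ _ => hR.symm) μ y]
  refine mul_div_cancel_left_of_imp fun h0 => ?_
  exact eq_zero_of_mass_eq_zero hR.refl hν (h ▸ h0)

end EquivClass

open EquivClass in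
/-- Conversely, if μ and ν agree on every equivalence class of R, then μ is related
to ν under the lifting of R. -/
theorem lifting_of_class_measure {X : Type*} [Fintype X]
    (R : X → X → Prop) [DecidableRel R] (hR : Equivalence R)
    (μ ν : X → ℝ) (hμ : IsDist μ) (hν : IsDist ν)
    (h : ∀ x : X, ∑ z ∈ Finset.univ.filter (fun z => R x z), μ z
               = ∑ z ∈ Finset.univ.filter (fun z => R x z), ν z) :
    IsLifting R μ ν :=
  ⟨coupling R μ ν,
    fun x y => ⟨coupling_nonneg hμ.1 hν.1 x y,
      (coupling_le hR.refl hμ.1 hν.1 x y).trans (hν.le_one y)⟩,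
    fun _ _ => rel_of_coupling_pos,
    fun x => sum_coupling_right hR.refl hμ.1 (h x),
    fun y => sum_coupling_left hR hν.1 (h y)⟩
end
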